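/- arXiv:2506.22553 — 9 statements merged into one kernel-verified Lean document; each statement's English description precedes it below -/
import Mathlib

section
/- Let C be a nonempty convex subset of ℝ^n and c ∈ C. Then F_c (the intersection of all faces of C containing c) is the unique face F of C such that c lies in the relative interior of F. -/
/-- `F` is a face of the convex set `C`. -/
def IsFace {E : Type*} [AddCommGroup E] [Module ℝ E] (C F : Set E) : Prop :=
  F ⊆ C ∧ ∀ x ∈ C, ∀ y ∈ C, (openSegment ℝ x y ∩ F).Nonempty → x ∈ F ∧ y ∈ F

open Set Metric

variable {E : Type*} [NormedAddCommGroup E] [NormedSpace ℝ E]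

lemma mem_intrinsicInterior_iff_ball {S : Set E} {c : E} :
    c ∈ intrinsicInterior ℝ S ↔
      c ∈ affineSpan ℝ S ∧ ∃ ε > 0, Metric.ball c ε ∩ (affineSpan ℝ S : Set E) ⊆ S := by
  constructor
  · rintro ⟨⟨c', hc'span⟩, hmem, rfl⟩
    refine ⟨hc'span, ?_⟩
    rw [mem_interior_iff_mem_nhds, Metric.mem_nhds_iff] at hmem
    obtain ⟨ε, hε, hball⟩ := hmem
    refine ⟨ε, hε, ?_⟩
    rintro w ⟨hw1, hw2⟩
    exact hball (show (⟨w, hw2⟩ : affineSpan ℝ S) ∈ Metric.ball _ ε from hw1)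
  · rintro ⟨hcspan, ε, hε, hball⟩
    refine ⟨⟨c, hcspan⟩, ?_, rfl⟩
    rw [mem_interior_iff_mem_nhds, Metric.mem_nhds_iff]
    exact ⟨ε, hε, fun z hz => hball ⟨hz, z.2⟩⟩

lemma mem_openSegment_add_smul {x c : E} {s : ℝ} (hs : 0 < s) :
    c ∈ openSegment ℝ x (c + s • (c - x)) := by
  have h1 : (0:ℝ) < 1 + s := by linarith
  refine ⟨s / (1 + s), 1 / (1 + s), by positivity, by positivity, by field_simp; ring, ?_⟩
  match_scalars <;> field_simp <;> ring

lemma exists_extension {S : Set E} {c x : E} (hc : c ∈ intrinsicInterior ℝ S) (hx : x ∈ S) :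
    ∃ y ∈ S, c ∈ openSegment ℝ x y := by
  obtain ⟨hcspan, ε, hε, hball⟩ := mem_intrinsicInterior_iff_ball.1 hc
  set s : ℝ := ε / (2 * (‖c - x‖ + 1)) with hs
  have hspos : 0 < s := by positivity
  refine ⟨c + s • (c - x), hball ⟨?_, ?_⟩, mem_openSegment_add_smul hspos⟩
  · rw [mem_ball, dist_eq_norm]
    have h2 : c + s • (c - x) - c = s • (c - x) := by abel
    rw [h2, norm_smul, Real.norm_eq_abs, abs_of_pos hspos, hs,
      div_mul_eq_mul_div, div_lt_iff₀ (by positivity)]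
    nlinarith [norm_nonneg (c - x)]
  · have := AffineSubspace.smul_vsub_vadd_mem (affineSpan ℝ S) s hcspan
      (subset_affineSpan ℝ S hx) hcspan
    simpa [vsub_eq_sub, vadd_eq_add, add_comm] using this

lemma mem_intrinsicInterior_of_extension [FiniteDimensional ℝ E] {S : Set E} (hS : Convex ℝ S)
    {c : E} (hc : c ∈ S) (hext : ∀ x ∈ S, ∃ y ∈ S, c ∈ openSegment ℝ x y) :
    c ∈ intrinsicInterior ℝ S := by
  obtain ⟨z, hz⟩ := Set.Nonempty.intrinsicInterior hS ⟨c, hc⟩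
  obtain ⟨hzspan, ε, hε, hball⟩ := mem_intrinsicInterior_iff_ball.1 hz
  obtain ⟨y, hyS, a, b, ha, hb, hab, habc⟩ := hext z (intrinsicInterior_subset hz)
  rw [mem_intrinsicInterior_iff_ball]
  refine ⟨subset_affineSpan ℝ S hc, a * ε, by positivity, ?_⟩
  rintro w ⟨hw1, hw2⟩
  set z' : E := z + (1/a) • (w - c) with hz'
  have hz'S : z' ∈ S := by
    refine hball ⟨?_, ?_⟩
    · rw [mem_ball, dist_eq_norm]
      have h2 : z' - z = (1/a) • (w - c) := by rw [hz']; abel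
      rw [h2, norm_smul, Real.norm_eq_abs, abs_of_pos (by positivity : (0:ℝ) < 1/a)]
      rw [mem_ball, dist_eq_norm] at hw1
      rw [one_div, inv_mul_lt_iff₀ ha]
      exact hw1
    · have h5 := AffineSubspace.smul_vsub_vadd_mem (affineSpan ℝ S) (1/a) hw2
        (subset_affineSpan ℝ S hc) hzspan
      have h6 : (1/a) • (w -ᵥ c) +ᵥ z = z + (1/a) • (w - c) := by
        rw [vsub_eq_sub, vadd_eq_add]; abel
      rw [hz', ← h6]
      exact h5
  have hkey : a • z' + b • y = w := by
    have h3 : a • z' + b • y = (a • z + b • y) + (w - c) := by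
      rw [hz']; match_scalars <;> field_simp
    rw [h3, habc]; abel
  exact hkey ▸ hS hz'S hyS ha.le hb.le hab

lemma aux_face_step {C : Set E} (hC : Convex ℝ C) {x y z u c : E} (hx : x ∈ C) (hy : y ∈ C)
    (hu : u ∈ C) (hzseg : z ∈ openSegment ℝ x y) (hcseg : c ∈ openSegment ℝ z u) :
    ∃ w ∈ C, c ∈ openSegment ℝ x w := by
  obtain ⟨s, t, hs, ht, hst, rfl⟩ := hzseg
  obtain ⟨a, b, ha, hb, hab, rfl⟩ := hcseg
  have h1 : 0 < a * t + b := by positivity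
  refine ⟨(a*t/(a*t+b)) • y + (b/(a*t+b)) • u,
    hC hy hu (by positivity) (by positivity) (by field_simp),
    a*s, a*t+b, by positivity, h1, by linear_combination a * hst + hab, ?_⟩
  match_scalars
  · ring
  · field_simp
  · field_simp
theorem face_unique_relint {n : ℕ} (C : Set (EuclideanSpace ℝ (Fin n)))
    (hCne : C.Nonempty) (hC : Convex ℝ C) (c : EuclideanSpace ℝ (Fin n)) (hc : c ∈ C) :
    IsFace C (⋂₀ {F | IsFace C F ∧ c ∈ F}) ∧
      c ∈ intrinsicInterior ℝ (⋂₀ {F | IsFace C F ∧ c ∈ F}) ∧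
      ∀ F : Set (EuclideanSpace ℝ (Fin n)), IsFace C F → c ∈ intrinsicInterior ℝ F →
        F = ⋂₀ {F | IsFace C F ∧ c ∈ F} := by
  set G : Set (EuclideanSpace ℝ (Fin n)) :=
    {x | x ∈ C ∧ ∃ y ∈ C, c ∈ openSegment ℝ x y} with hGdef
  have hcG : c ∈ G :=
    ⟨hc, c, hc, 1/2, 1/2, by norm_num, by norm_num, by norm_num, by module⟩
  have hGface : IsFace C G := by
    refine ⟨fun x hx => hx.1, ?_⟩
    rintro x hx y hy ⟨z, hzseg, hzC, u, huC, hcseg⟩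
    constructor
    · obtain ⟨w, hwC, hw⟩ := aux_face_step hC hx hy huC hzseg hcseg
      exact ⟨hx, w, hwC, hw⟩
    · obtain ⟨w, hwC, hw⟩ := aux_face_step hC hy hx huC (openSegment_symm ℝ x y ▸ hzseg) hcseg
      exact ⟨hy, w, hwC, hw⟩
  have hGsub : ∀ F, IsFace C F → c ∈ F → G ⊆ F := by
    rintro F hF hcF x ⟨hxC, y, hyC, hcseg⟩
    exact (hF.2 x hxC y hyC ⟨c, hcseg, hcF⟩).1
  have hMG : ⋂₀ {F | IsFace C F ∧ c ∈ F} = G := by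
    apply subset_antisymm
    · exact sInter_subset_of_mem ⟨hGface, hcG⟩
    · exact fun x hx => mem_sInter.2 fun F hF => hGsub F hF.1 hF.2 hx
  have hGconv : Convex ℝ G := by
    rintro x₁ ⟨hx₁C, y₁, hy₁C, a₁, b₁, ha₁, hb₁, hab₁, hc₁⟩
      x₂ ⟨hx₂C, y₂, hy₂C, a₂, b₂, ha₂, hb₂, hab₂, hc₂⟩ lam mu hlam hmu hlm
    refine ⟨hC hx₁C hx₂C hlam hmu hlm, ?_⟩
    have hmu' : mu = 1 - lam := by linarith
    subst hmu'
    set s : ℝ := min (a₁/b₁) (a₂/b₂) with hsdef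
    have hs : 0 < s := lt_min (by positivity) (by positivity)
    have hsb₁ : s * b₁ ≤ a₁ := (le_div_iff₀ hb₁).1 (min_le_left _ _)
    have hsb₂ : s * b₂ ≤ a₂ := (le_div_iff₀ hb₂).1 (min_le_right _ _)
    have hz₁ : c + s • (c - x₁) ∈ C := by
      have h1 : c + s • (c - x₁) = (a₁ - s*b₁) • x₁ + (b₁ + s*b₁) • y₁ := by
        rw [← hc₁]; match_scalars
        · linear_combination s * hab₁
        · ring
      rw [h1]
      exact hC hx₁C hy₁C (by linarith) (by positivity) (by linarith)
    have hz₂ : c + s • (c - x₂) ∈ C := by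
      have h1 : c + s • (c - x₂) = (a₂ - s*b₂) • x₂ + (b₂ + s*b₂) • y₂ := by
        rw [← hc₂]; match_scalars
        · linear_combination s * hab₂
        · ring
      rw [h1]
      exact hC hx₂C hy₂C (by linarith) (by positivity) (by linarith)
    refine ⟨c + s • (c - (lam • x₁ + (1 - lam) • x₂)), ?_,
      mem_openSegment_add_smul hs⟩
    have h2 : c + s • (c - (lam • x₁ + (1 - lam) • x₂)) =
        lam • (c + s • (c - x₁)) + (1 - lam) • (c + s • (c - x₂)) := by
      match_scalars <;> ring
    rw [h2]
    exact hC hz₁ hz₂ hlam hmu (by ring)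
  have hGext : ∀ x ∈ G, ∃ y ∈ G, c ∈ openSegment ℝ x y := by
    rintro x ⟨hxC, y, hyC, hcseg⟩
    exact ⟨y, (hGface.2 x hxC y hyC ⟨c, hcseg, hcG⟩).2, hcseg⟩
  have hcint : c ∈ intrinsicInterior ℝ G :=
    mem_intrinsicInterior_of_extension hGconv hcG hGext
  rw [hMG]
  refine ⟨hGface, hcint, ?_⟩
  intro F hF hcF
  apply subset_antisymm
  · intro x hxF
    obtain ⟨y, hyF, hcseg⟩ := exists_extension hcF hxF
    exact (hGface.2 x (hF.1 hxF) y (hF.1 hyF) ⟨c, hcseg, hcG⟩).1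
  · exact hGsub F hF (intrinsicInterior_subset hcF)
end

section
/- Let C be a nonempty convex subset of ℝ^n. Then C is the union over all its faces F of the relative interiors ri F, and this union is a partition: distinct faces have disjoint relative interiors. -/
open Set AffineMap

section Algebra

variable {E : Type*} [AddCommGroup E] [Module ℝ E]

/-- If `p ∈ ]a,b[` and `x ∈ ]p,q[`, then `x ∈ ]a,z[` for some `z ∈ [b,q]`. -/
lemma seg_trans {a b p q x : E} (hp : p ∈ openSegment ℝ a b) (hx : x ∈ openSegment ℝ p q) :
    ∃ z ∈ segment ℝ b q, x ∈ openSegment ℝ a z := by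
  obtain ⟨s, s', hs, hs', hss, hpeq⟩ := hp
  obtain ⟨t, t', ht, ht', htt, hxeq⟩ := hx
  set M : ℝ := t * s' + t' with hM
  have hM0 : 0 < M := by positivity
  refine ⟨(t * s' / M) • b + (t' / M) • q,
    ⟨t * s' / M, t' / M, by positivity, by positivity, by field_simp; exact hM.symm, rfl⟩,
    t * s, M, by positivity, hM0, ?_, ?_⟩
  · simp only [hM]; linear_combination t * hss + htt
  · rw [← hxeq, ← hpeq]
    match_scalars <;> field_simp <;> ring

/-- If `x ∈ ]a,q[`, `x ∈ ]b,r[` and `p ∈ ]a,b[`, then `x ∈ ]p,z[` for some `z ∈ [q,r]`. -/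
lemma seg_trans2 {a b q r p x : E} (haq : x ∈ openSegment ℝ a q) (hbr : x ∈ openSegment ℝ b r)
    (hab : p ∈ openSegment ℝ a b) :
    ∃ z ∈ segment ℝ q r, x ∈ openSegment ℝ p z := by
  obtain ⟨t, t', ht, ht', htt, hteq⟩ := haq
  obtain ⟨u, u', hu, hu', huu, hueq⟩ := hbr
  obtain ⟨s, s', hs, hs', hss, hseq⟩ := hab
  set N : ℝ := s * u + s' * t with hN
  set B : ℝ := s * t' * u with hB
  set Cc : ℝ := s' * u' * t with hCc
  have hN0 : 0 < N := by positivity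
  have hB0 : 0 < B := by positivity
  have hC0 : 0 < Cc := by positivity
  have hBC0 : 0 < B + Cc := by positivity
  have hMsum : t * u + (B + Cc) = N := by
    simp only [hN, hB, hCc]
    linear_combination (-(t * u)) * hss + (s * u) * htt + (s' * t) * huu
  have key : N • x = (t * u * s) • a + (t * u * s') • b + B • q + Cc • r := by
    calc N • x = (s * u) • x + (s' * t) • x := by rw [hN]; module
    _ = (s * u) • (t • a + t' • q) + (s' * t) • (u • b + u' • r) := by rw [hteq, hueq]
    _ = (t * u * s) • a + (t * u * s') • b + B • q + Cc • r := by
        simp only [hB, hCc]; module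
  refine ⟨(B / (B + Cc)) • q + (Cc / (B + Cc)) • r,
    ⟨B / (B + Cc), Cc / (B + Cc), by positivity, by positivity, by field_simp, rfl⟩,
    t * u / N, (B + Cc) / N, by positivity, by positivity, ?_, ?_⟩
  · field_simp
    linarith [hMsum]
  · have hx2 : x = (1 / N) • (N • x) := by
      rw [smul_smul, one_div, inv_mul_cancel₀ hN0.ne', one_smul]
    rw [← hseq]
    conv_rhs => rw [hx2, key]
    match_scalars <;> field_simp <;> ring

end Algebra

section Intrinsic

variable {V : Type*} [NormedAddCommGroup V] [NormedSpace ℝ V] [FiniteDimensional ℝ V]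

/-- A segment from any point of a set can be extended beyond a point of the
intrinsic interior, staying inside the set. -/
lemma exists_extend {F : Set V} {x y : V} (hx : x ∈ intrinsicInterior ℝ F) (hy : y ∈ F) :
    ∃ z ∈ F, x ∈ openSegment ℝ y z := by
  have hxF : x ∈ F := intrinsicInterior_subset hx
  by_cases hxy : y = x
  · subst hxy
    exact ⟨y, hy, by rw [openSegment_same]; exact rfl⟩
  obtain ⟨x', hx', hx'coe⟩ := mem_intrinsicInterior.1 hx
  haveI : Nonempty (affineSpan ℝ F) := ⟨x'⟩
  have hyS : y ∈ affineSpan ℝ F := subset_affineSpan ℝ F hy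
  set y' : affineSpan ℝ F := ⟨y, hyS⟩ with hy'
  set φ : ℝ →ᵃ[ℝ] affineSpan ℝ F := AffineMap.lineMap y' x' with hφ
  have hcont : Continuous φ := φ.continuous_of_finiteDimensional
  have hopen : IsOpen (φ ⁻¹' interior ((↑) ⁻¹' F : Set (affineSpan ℝ F))) :=
    isOpen_interior.preimage hcont
  have h1 : (1 : ℝ) ∈ φ ⁻¹' interior ((↑) ⁻¹' F : Set (affineSpan ℝ F)) := by
    simp only [mem_preimage, hφ, AffineMap.lineMap_apply_one]
    exact hx'
  obtain ⟨ε, hε, hball⟩ := Metric.isOpen_iff.1 hopen 1 h1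
  set c : ℝ := 1 + ε / 2 with hc
  have hc1 : 1 < c := by simp [hc]; linarith
  have hcmem : c ∈ φ ⁻¹' interior ((↑) ⁻¹' F : Set (affineSpan ℝ F)) := by
    apply hball
    simp only [Metric.mem_ball, Real.dist_eq, hc]
    rw [abs_of_nonneg (by linarith)]
    linarith
  have hzF : ((φ c : affineSpan ℝ F) : V) ∈ F := by
    have hmem : φ c ∈ interior ((↑) ⁻¹' F : Set (affineSpan ℝ F)) := hcmem
    have h2 : φ c ∈ ((↑) ⁻¹' F : Set (affineSpan ℝ F)) := interior_subset hmem
    exact h2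
  refine ⟨φ c, hzF, ?_⟩
  have hzeq : ((φ c : affineSpan ℝ F) : V) = AffineMap.lineMap y x c := by
    have h := (affineSpan ℝ F).subtype.apply_lineMap y' x' c
    have h2 : (affineSpan ℝ F).subtype (AffineMap.lineMap y' x' c)
        = ((φ c : affineSpan ℝ F) : V) := by
      rw [AffineSubspace.subtype_apply]
    rw [← h2, h, AffineSubspace.subtype_apply, AffineSubspace.subtype_apply, hx'coe]
  rw [openSegment_eq_image_lineMap]
  refine ⟨1 / c, ⟨by positivity, by rw [div_lt_one (by linarith)]; linarith⟩, ?_⟩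
  rw [hzeq]
  simp only [AffineMap.lineMap_apply, vsub_eq_sub, vadd_eq_add]
  match_scalars <;> field_simp <;> ring

/-- The open segment from a point of the intrinsic interior of a convex set to a
point of the set lies in the intrinsic interior. -/
lemma openSegment_sub_intrinsicInterior {F : Set V} (hF : Convex ℝ F) {w z x : V}
    (hw : w ∈ intrinsicInterior ℝ F) (hz : z ∈ F) (hx : x ∈ openSegment ℝ w z) :
    x ∈ intrinsicInterior ℝ F := by
  obtain ⟨c, c', hc, hc', hcc, hceq⟩ := hx
  obtain ⟨w', hw', hw'coe⟩ := mem_intrinsicInterior.1 hw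
  haveI : Nonempty (affineSpan ℝ F) := ⟨w'⟩
  have hwF : w ∈ F := intrinsicInterior_subset hw
  have hxF : x ∈ F := hceq ▸ hF hwF hz hc.le hc'.le hcc
  set z' : affineSpan ℝ F := ⟨z, subset_affineSpan ℝ F hz⟩ with hz'
  set x' : affineSpan ℝ F := ⟨x, subset_affineSpan ℝ F hxF⟩ with hx'
  set ρ : affineSpan ℝ F →ᵃ[ℝ] affineSpan ℝ F := AffineMap.homothety z' c⁻¹ with hρ
  have hcont : Continuous ρ := ρ.continuous_of_finiteDimensional
  have hcoe : ∀ v : affineSpan ℝ F, ((ρ v : affineSpan ℝ F) : V) = c⁻¹ • ((v : V) - z) + z := by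
    intro v
    simp only [hρ, AffineMap.homothety_apply]
    rw [AffineSubspace.coe_vadd]
    congr 1
  have hρx : ρ x' = w' := by
    apply Subtype.ext
    rw [hcoe x', hw'coe]
    show c⁻¹ • (x - z) + z = w
    rw [← hceq]
    match_scalars <;> field_simp <;> linarith
  have hmem : x' ∈ ρ ⁻¹' interior ((↑) ⁻¹' F : Set (affineSpan ℝ F)) := by
    simp only [mem_preimage, hρx]
    exact hw'
  have hsub : ρ ⁻¹' interior ((↑) ⁻¹' F : Set (affineSpan ℝ F)) ⊆
      ((↑) ⁻¹' F : Set (affineSpan ℝ F)) := by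
    intro v hv
    have hρvF : ((ρ v : affineSpan ℝ F) : V) ∈ F := by
      have hmem : ρ v ∈ interior ((↑) ⁻¹' F : Set (affineSpan ℝ F)) := hv
      have h2 : ρ v ∈ ((↑) ⁻¹' F : Set (affineSpan ℝ F)) := interior_subset hmem
      exact h2
    show (v : V) ∈ F
    have hveq : (v : V) = c • ((ρ v : affineSpan ℝ F) : V) + (1 - c) • z := by
      rw [hcoe v]
      match_scalars <;> field_simp <;> ring
    rw [hveq]
    exact hF hρvF hz hc.le (by linarith) (by ring)
  have hint : x' ∈ interior ((↑) ⁻¹' F : Set (affineSpan ℝ F)) :=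
    ((isOpen_interior.preimage hcont).subset_interior_iff.2 hsub) hmem
  exact mem_intrinsicInterior.2 ⟨x', hint, rfl⟩

end Intrinsic

theorem partition_by_relint_of_faces {n : ℕ} (C : Set (EuclideanSpace ℝ (Fin n)))
    (hCne : C.Nonempty) (hC : Convex ℝ C) :
    (⋃ F ∈ {F | IsFace C F}, intrinsicInterior ℝ F) = C ∧
      ∀ F G : Set (EuclideanSpace ℝ (Fin n)), IsFace C F → IsFace C G → F ≠ G →
        intrinsicInterior ℝ F ∩ intrinsicInterior ℝ G = ∅ := by
  constructor
  · apply Set.Subset.antisymm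
    · intro x hx
      simp only [Set.mem_iUnion, Set.mem_setOf_eq] at hx
      obtain ⟨F, hF, hxF⟩ := hx
      exact hF.1 (intrinsicInterior_subset hxF)
    · intro x hx
      set Fx : Set (EuclideanSpace ℝ (Fin n)) :=
        {y | y ∈ C ∧ ∃ z ∈ C, x ∈ openSegment ℝ y z} with hFxdef
      have hxFx : x ∈ Fx := ⟨hx, x, hx, by rw [openSegment_same]; exact rfl⟩
      have hface : IsFace C Fx := by
        refine ⟨fun y hy => hy.1, ?_⟩
        rintro a ha b hb ⟨p, hpseg, hpC, q, hqC, hxpq⟩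
        constructor
        · obtain ⟨zz, hzz, hxz⟩ := seg_trans hpseg hxpq
          exact ⟨ha, zz, hC.segment_subset hb hqC hzz, hxz⟩
        · have hpseg' : p ∈ openSegment ℝ b a := by rw [openSegment_symm]; exact hpseg
          obtain ⟨zz, hzz, hxz⟩ := seg_trans hpseg' hxpq
          exact ⟨hb, zz, hC.segment_subset ha hqC hzz, hxz⟩
      have hconv : Convex ℝ Fx := by
        rw [convex_iff_openSegment_subset]
        rintro a ⟨haC, q, hqC, haq⟩ b ⟨hbC, r, hrC, hbr⟩ p hp
        have hpC : p ∈ C := hC.segment_subset haC hbC (openSegment_subset_segment ℝ a b hp)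
        obtain ⟨zz, hzz, hxz⟩ := seg_trans2 haq hbr hp
        exact ⟨hpC, zz, hC.segment_subset hqC hrC hzz, hxz⟩
      obtain ⟨w, hw⟩ := Set.Nonempty.intrinsicInterior hconv ⟨x, hxFx⟩
      obtain ⟨hwC, z, hzC, hxwz⟩ := intrinsicInterior_subset hw
      have hzFx : z ∈ Fx := ⟨hzC, w, hwC, by rw [openSegment_symm]; exact hxwz⟩
      have hxint : x ∈ intrinsicInterior ℝ Fx :=
        openSegment_sub_intrinsicInterior hconv hw hzFx hxwz
      exact Set.mem_biUnion hface hxint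
  · rintro F G hF hG hne
    rw [Set.eq_empty_iff_forall_notMem]
    rintro x ⟨hxF, hxG⟩
    apply hne
    apply Set.Subset.antisymm
    · intro y hy
      obtain ⟨z, hzF, hxyz⟩ := exists_extend hxF hy
      exact (hG.2 y (hF.1 hy) z (hF.1 hzF) ⟨x, hxyz, intrinsicInterior_subset hxG⟩).1
    · intro y hy
      obtain ⟨z, hzG, hxyz⟩ := exists_extend hxG hy
      exact (hF.2 y (hG.1 hy) z (hG.1 hzG) ⟨x, hxyz, intrinsicInterior_subset hxF⟩).1
end

section
/- If two faces F and G of a convex set C in ℝ^n have relative interiors with nonempty intersection, then F = G. -/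
open Set

lemma extend_relint {E : Type*} [NormedAddCommGroup E] [NormedSpace ℝ E]
    {F : Set E} {z x : E} (hz : z ∈ intrinsicInterior ℝ F) (hx : x ∈ F) :
    ∃ y ∈ F, z ∈ openSegment ℝ x y := by
  rw [mem_intrinsicInterior] at hz
  obtain ⟨z', hz', hzz⟩ := hz
  subst hzz
  have hxspan : x ∈ affineSpan ℝ F := subset_affineSpan ℝ F hx
  have hmem : ∀ t : ℝ, (1 + t) • (z' : E) - t • x ∈ affineSpan ℝ F := by
    intro t
    have h1 := AffineSubspace.smul_vsub_vadd_mem (affineSpan ℝ F) t z'.2 hxspan z'.2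
    have e : t • ((z' : E) -ᵥ x) +ᵥ (z' : E) = (1 + t) • (z' : E) - t • x := by
      simp only [vsub_eq_sub, vadd_eq_add]; module
    rwa [e] at h1
  set g : ℝ → affineSpan ℝ F := fun t => ⟨(1 + t) • (z' : E) - t • x, hmem t⟩ with hg
  have hcont : Continuous g := by
    apply Continuous.subtype_mk
    fun_prop
  have h0 : g 0 ∈ interior ((↑) ⁻¹' F : Set (affineSpan ℝ F)) := by
    have : g 0 = z' := by simp [hg]
    rwa [this]
  have hev : ∀ᶠ t in nhds (0:ℝ), g t ∈ interior ((↑) ⁻¹' F : Set (affineSpan ℝ F)) :=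
    hcont.continuousAt.eventually_mem (isOpen_interior.mem_nhds h0)
  have h2 : ∀ᶠ t in nhdsWithin 0 (Set.Ioi (0:ℝ)),
      g t ∈ interior ((↑) ⁻¹' F : Set (affineSpan ℝ F)) :=
    eventually_nhdsWithin_of_eventually_nhds hev
  obtain ⟨t, htmem, htpos⟩ := (h2.and eventually_mem_nhdsWithin).exists
  have ht0 : (0:ℝ) < t := mem_Ioi.mp htpos
  have h1t : (0:ℝ) < 1 + t := by linarith
  have hyF : (1 + t) • (z' : E) - t • x ∈ F := by
    have h := interior_subset (s := ((↑) ⁻¹' F : Set (affineSpan ℝ F))) htmem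
    exact h
  refine ⟨(1 + t) • (z' : E) - t • x, hyF, ?_⟩
  refine ⟨t / (1 + t), 1 / (1 + t), by positivity, by positivity, ?_, ?_⟩
  · field_simp; ring
  · have := h1t.ne'
    match_scalars <;> field_simp <;> ring

lemma face_subset_of_relint {E : Type*} [NormedAddCommGroup E] [NormedSpace ℝ E]
    {C F G : Set E} (hF : IsFace C F) (hG : IsFace C G) {z : E}
    (hzF : z ∈ intrinsicInterior ℝ F) (hzG : z ∈ intrinsicInterior ℝ G) : F ⊆ G := by
  intro x hx
  obtain ⟨y, hyF, hzseg⟩ := extend_relint hzF hx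
  exact (hG.2 x (hF.1 hx) y (hF.1 hyF) ⟨z, hzseg, intrinsicInterior_subset hzG⟩).1

theorem faces_eq_of_relint_inter {n : ℕ} (C : Set (EuclideanSpace ℝ (Fin n)))
    (hC : Convex ℝ C) (F G : Set (EuclideanSpace ℝ (Fin n)))
    (hF : IsFace C F) (hG : IsFace C G)
    (h : (intrinsicInterior ℝ F ∩ intrinsicInterior ℝ G).Nonempty) :
    F = G := by
  obtain ⟨z, hzF, hzG⟩ := h
  exact Set.Subset.antisymm (face_subset_of_relint hF hG hzF hzG)
    (face_subset_of_relint hG hF hzG hzF)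
end

section
/- Let C be a nonempty closed convex subset of ℝ^n, let F be a face of C, and let x ∈ ℝ^n be such that the projection P_C x lies in the relative interior of F. Then P_C x = P_{aff F} x, where aff F is the affine hull of F. -/
/-- `p` is the nearest-point (metric) projection of `x` onto the set `C`. -/
def IsProj {E : Type*} [NormedAddCommGroup E] (C : Set E) (x p : E) : Prop :=
  p ∈ C ∧ ∀ y ∈ C, dist x p ≤ dist x y

theorem proj_eq_proj_affineSpan_of_mem_relint_face {n : ℕ}
    (C : Set (EuclideanSpace ℝ (Fin n))) (hCne : C.Nonempty) (hCcl : IsClosed C)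
    (hC : Convex ℝ C) (F : Set (EuclideanSpace ℝ (Fin n))) (hF : IsFace C F)
    (x p : EuclideanSpace ℝ (Fin n)) (hp : IsProj C x p)
    (hri : p ∈ intrinsicInterior ℝ F) :
    IsProj ((affineSpan ℝ F : AffineSubspace ℝ (EuclideanSpace ℝ (Fin n))) :
      Set (EuclideanSpace ℝ (Fin n))) x p := by
  obtain ⟨hpC, hmin⟩ := hp
  have hpF : p ∈ F := intrinsicInterior_subset hri
  have hFC : F ⊆ C := hF.1
  have hspan : p ∈ affineSpan ℝ F := subset_affineSpan ℝ F hpF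
  -- variational inequality
  have hinf : ‖x - p‖ = ⨅ w : C, ‖x - w‖ := by
    have hne : Nonempty C := ⟨⟨p, hpC⟩⟩
    refine le_antisymm (le_ciInf fun w => ?_) (ciInf_le ⟨0, fun _ ⟨_, h⟩ => h ▸ norm_nonneg _⟩ (⟨p, hpC⟩ : C))
    have := hmin w w.2
    simpa [dist_eq_norm] using this
  have hvar : ∀ z ∈ C, inner ℝ (x - p) (z - p) ≤ (0 : ℝ) :=
    (norm_eq_iInf_iff_real_inner_le_zero hC hpC).1 hinf
  -- orthogonality on the affine span
  have horth : ∀ y ∈ affineSpan ℝ F, inner ℝ (x - p) (y - p) = (0 : ℝ) := by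
    intro y hy
    obtain ⟨q, hq, hqp⟩ := hri
    have hmemspan : ∀ t : ℝ, p + t • (y - p) ∈ affineSpan ℝ F := by
      intro t
      have := AffineSubspace.smul_vsub_vadd_mem (affineSpan ℝ F) t hy hspan hspan
      simpa [vsub_eq_sub, vadd_eq_add, add_comm] using this
    set φ : ℝ → (affineSpan ℝ F : AffineSubspace ℝ (EuclideanSpace ℝ (Fin n))) :=
      fun t => ⟨p + t • (y - p), hmemspan t⟩ with hφ
    have hcont : Continuous φ := by
      apply Continuous.subtype_mk
      exact continuous_const.add (continuous_id.smul continuous_const)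
    have hφ0 : φ 0 = q := by
      apply Subtype.ext
      simp [hφ, hqp]
    have hopen : IsOpen (φ ⁻¹' interior ((↑) ⁻¹' F : Set (affineSpan ℝ F))) :=
      isOpen_interior.preimage hcont
    have h0mem : (0 : ℝ) ∈ φ ⁻¹' interior ((↑) ⁻¹' F : Set (affineSpan ℝ F)) := by
      simp only [Set.mem_preimage, hφ0]; exact hq
    obtain ⟨δ, hδpos, hball⟩ := Metric.isOpen_iff.1 hopen 0 h0mem
    have hmemF : ∀ t : ℝ, |t| < δ → p + t • (y - p) ∈ F := by
      intro t ht
      have : t ∈ Metric.ball (0 : ℝ) δ := by simpa [Real.dist_eq] using ht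
      have := interior_subset (hball this)
      simpa [hφ] using this
    have habs : |(δ/2 : ℝ)| < δ := by rw [abs_of_pos (by linarith)]; linarith
    have habs' : |(-(δ/2) : ℝ)| < δ := by rw [abs_neg]; exact habs
    have h1 := hvar _ (hFC (hmemF (δ/2) habs))
    have h2 := hvar _ (hFC (hmemF (-(δ/2)) habs'))
    have e1 : p + (δ/2) • (y - p) - p = (δ/2) • (y - p) := by abel
    have e2 : p + (-(δ/2)) • (y - p) - p = (-(δ/2)) • (y - p) := by abel
    rw [e1, real_inner_smul_right] at h1
    rw [e2, real_inner_smul_right] at h2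
    nlinarith
  refine ⟨hspan, fun y hy => ?_⟩
  have h := horth y hy
  rw [dist_eq_norm, dist_eq_norm]
  have hxy : x - y = (x - p) - (y - p) := by abel
  have hsq : ‖x - y‖^2 = ‖x - p‖^2 + ‖y - p‖^2 := by
    rw [hxy, @norm_sub_sq_real, h]; ring
  nlinarith [norm_nonneg (x - y), norm_nonneg (x - p), norm_nonneg (y - p)]
end

section
/- Let C be a nonempty closed convex subset of ℝ^n and x ∈ ℝ^n. Then there exists a face F of C such that P_C x = P_{aff F} x. -/
set_option maxHeartbeats 800000

open RealInnerProductSpace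

private lemma aux_inner_nonpos {n : ℕ} {C : Set (EuclideanSpace ℝ (Fin n))}
    (hC : Convex ℝ C) {x p : EuclideanSpace ℝ (Fin n)} (hp : IsProj C x p)
    {y : EuclideanSpace ℝ (Fin n)} (hy : y ∈ C) : ⟪x - p, y - p⟫ ≤ 0 := by
  set v := x - p with hv
  set w := y - p with hw
  clear_value v w
  by_contra hpos
  push_neg at hpos
  have hwne : w ≠ 0 := by
    intro h
    rw [h, inner_zero_right] at hpos
    exact lt_irrefl 0 hpos
  have hwnorm : (0 : ℝ) < ‖w‖ ^ 2 := pow_pos (norm_pos_iff.mpr hwne) 2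
  -- choose t small
  set t : ℝ := min 1 (⟪v, w⟫ / ‖w‖ ^ 2) with ht
  have ht0 : 0 < t := lt_min one_pos (div_pos hpos hwnorm)
  have ht1 : t ≤ 1 := min_le_left _ _
  have hmem : p + t • w ∈ C := by
    have := hC hp.1 hy (a := 1 - t) (b := t) (by linarith) (le_of_lt ht0) (by ring)
    have heq : (1 - t) • p + t • y = p + t • w := by rw [hw]; module
    rwa [heq] at this
  have hdist := hp.2 _ hmem
  rw [dist_eq_norm, dist_eq_norm] at hdist
  have hxq : x - (p + t • w) = v - t • w := by rw [hv]; abel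
  rw [hxq] at hdist
  rw [← hv] at hdist
  have hsq : ‖v‖ ^ 2 ≤ ‖v - t • w‖ ^ 2 := by
    have h0 : (0:ℝ) ≤ ‖v‖ := norm_nonneg _
    nlinarith [norm_nonneg (v - t • w)]
  have hexp : ‖v - t • w‖ ^ 2 = ‖v‖ ^ 2 - 2 * (t * ⟪v, w⟫) + (t * ‖w‖) ^ 2 := by
    rw [norm_sub_sq_real, real_inner_smul_right, norm_smul, Real.norm_eq_abs, abs_of_pos ht0]
  have key : 2 * ⟪v, w⟫ ≤ t * ‖w‖ ^ 2 := by
    rw [hexp] at hsq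
    have htne : t ≠ 0 := ne_of_gt ht0
    nlinarith
  have ht2 : t ≤ ⟪v, w⟫ / ‖w‖ ^ 2 := min_le_right _ _
  have : t * ‖w‖ ^ 2 ≤ ⟪v, w⟫ := by
    calc t * ‖w‖ ^ 2 ≤ (⟪v, w⟫ / ‖w‖ ^ 2) * ‖w‖ ^ 2 := by nlinarith
      _ = ⟪v, w⟫ := by field_simp
  linarith

theorem exists_face_proj_eq_proj_affineSpan {n : ℕ}
    (C : Set (EuclideanSpace ℝ (Fin n))) (hCne : C.Nonempty) (hCcl : IsClosed C)
    (hC : Convex ℝ C) (x p : EuclideanSpace ℝ (Fin n)) (hp : IsProj C x p) :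
    ∃ F : Set (EuclideanSpace ℝ (Fin n)), IsFace C F ∧
      IsProj ((affineSpan ℝ F : AffineSubspace ℝ (EuclideanSpace ℝ (Fin n))) :
        Set (EuclideanSpace ℝ (Fin n))) x p := by
  set v := x - p with hv
  set F : Set (EuclideanSpace ℝ (Fin n)) := {y ∈ C | ⟪v, y - p⟫ = 0} with hF
  have hpF : p ∈ F := ⟨hp.1, by simp⟩
  refine ⟨F, ⟨fun y hy => hy.1, ?_⟩, ?_⟩
  · rintro y hy z hz ⟨w, hw, hwF⟩
    rcases hw with ⟨a, b, ha, hb, hab, rfl⟩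
    have hy' : ⟪v, y - p⟫ ≤ 0 := aux_inner_nonpos hC hp hy
    have hz' : ⟪v, z - p⟫ ≤ 0 := aux_inner_nonpos hC hp hz
    have hsum : a * ⟪v, y - p⟫ + b * ⟪v, z - p⟫ = 0 := by
      have := hwF.2
      have hexp : a • y + b • z - p = a • (y - p) + b • (z - p) := by
        have h3 : a • (y - p) + b • (z - p) = a • y + b • z - (a + b) • p := by module
        rw [h3, hab, one_smul]
      rw [hexp, inner_add_right, real_inner_smul_right, real_inner_smul_right] at this
      linarith
    have h1 : ⟪v, y - p⟫ = 0 := by nlinarith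
    have h2 : ⟪v, z - p⟫ = 0 := by nlinarith
    exact ⟨⟨hy, h1⟩, ⟨hz, h2⟩⟩
  · refine ⟨subset_affineSpan ℝ F hpF, fun q hq => ?_⟩
    -- every point of affineSpan F has ⟪v, q - p⟫ = 0
    have hle : affineSpan ℝ F ≤ AffineSubspace.mk' p (Submodule.span ℝ {v})ᗮ := by
      rw [affineSpan_le]
      intro y hy
      rw [SetLike.mem_coe, AffineSubspace.mem_mk']
      rw [Submodule.mem_orthogonal_singleton_iff_inner_right]
      simpa using hy.2
    have hq' : ⟪v, q - p⟫ = 0 := by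
      have := hle hq
      rw [AffineSubspace.mem_mk',
        Submodule.mem_orthogonal_singleton_iff_inner_right] at this
      simpa using this
    rw [dist_eq_norm, dist_eq_norm]
    have hx : x - q = v - (q - p) := by rw [hv]; abel
    have : ‖x - q‖ ^ 2 = ‖v‖ ^ 2 + ‖q - p‖ ^ 2 := by
      rw [hx, norm_sub_sq_real, hq']
      ring
    have h1 : ‖v‖ ^ 2 ≤ ‖x - q‖ ^ 2 := by nlinarith [sq_nonneg ‖q - p‖]
    nlinarith [norm_nonneg (x - q), norm_nonneg v]
end

section
/- A nonempty closed convex subset C of ℝ^n is polyhedral (a finite intersection of closed halfspaces) if and only if C has only finitely many faces. -/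
open scoped RealInnerProductSpace

/-- `C` is polyhedral: a finite intersection of closed halfspaces. -/
def IsPolyhedral {E : Type*} [NormedAddCommGroup E] [InnerProductSpace ℝ E]
    (C : Set E) : Prop :=
  ∃ (m : ℕ) (a : Fin m → E) (β : Fin m → ℝ), (∀ i, a i ≠ 0) ∧
    C = {x | ∀ i, ⟪a i, x⟫ ≤ β i}

section Helpers

variable {E : Type*} [NormedAddCommGroup E] [InnerProductSpace ℝ E]

/-- An exposed subset of `C` is a face of `C`. -/
lemma isFace_exposed {C : Set E} {a : E} {β : ℝ} (hsupp : ∀ x ∈ C, ⟪a, x⟫ ≤ β) :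
    IsFace C (C ∩ {x | ⟪a, x⟫ = β}) := by
  refine ⟨Set.inter_subset_left, ?_⟩
  rintro x hx y hy ⟨z, hz, hzC, hzF⟩
  obtain ⟨u, v, hu, hv, huv, rfl⟩ := hz
  have hax := hsupp x hx
  have hay := hsupp y hy
  have h : u * ⟪a, x⟫ + v * ⟪a, y⟫ = β := by
    simpa [inner_add_right, real_inner_smul_right] using hzF
  have hβ : u * β + v * β = β := by rw [← add_mul, huv, one_mul]
  have hx' : ⟪a, x⟫ = β := by
    by_contra hne
    have h1 : ⟪a, x⟫ < β := lt_of_le_of_ne hax hne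
    have h2 := mul_lt_mul_of_pos_left h1 hu
    have h3 := mul_le_mul_of_nonneg_left hay hv.le
    linarith
  have hy' : ⟪a, y⟫ = β := by
    by_contra hne
    have h1 : ⟪a, y⟫ < β := lt_of_le_of_ne hay hne
    have h2 := mul_lt_mul_of_pos_left h1 hv
    have h3 := mul_le_mul_of_nonneg_left hax hu.le
    linarith
  exact ⟨⟨hx, hx'⟩, ⟨hy, hy'⟩⟩

/-- A polyhedral set has finitely many faces. -/
lemma finite_faces_of_polyhedral {m : ℕ} (a : Fin m → E) (β : Fin m → ℝ) :
    {F | IsFace {x | ∀ i, ⟪a i, x⟫ ≤ β i} F}.Finite := by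
  set C : Set E := {x | ∀ i, ⟪a i, x⟫ ≤ β i} with hCdef
  set P : Set (Fin m) → Set E := fun I => {y | y ∈ C ∧ ∀ i ∈ I, ⟪a i, y⟫ = β i} with hP
  have key : ∀ F, IsFace C F → ∀ x ∈ F, P {i | ⟪a i, x⟫ = β i} ⊆ F := by
    intro F hF x hx y hy
    have hxC : x ∈ C := hF.1 hx
    have hyC : y ∈ C := hy.1
    obtain ⟨ε, hε0, hε⟩ :
        ∃ ε > 0, ∀ i, ⟪a i, x⟫ ≠ β i → ⟪a i, x⟫ + ε * (⟪a i, x⟫ - ⟪a i, y⟫) ≤ β i := by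
      rcases isEmpty_or_nonempty (Fin m) with hm | hm
      · exact ⟨1, one_pos, fun i => isEmptyElim i⟩
      · set δ : Fin m → ℝ := fun i =>
          if ⟪a i, x⟫ = β i then 1
          else (β i - ⟪a i, x⟫) / (|⟪a i, x⟫ - ⟪a i, y⟫| + 1) with hδdef
        have hδ : ∀ i, 0 < δ i := by
          intro i
          simp only [hδdef]
          split
          · exact one_pos
          · rename_i h
            apply div_pos
            · exact sub_pos.2 (lt_of_le_of_ne (hxC i) h)
            · positivity
        refine ⟨Finset.univ.inf' Finset.univ_nonempty δ, ?_, ?_⟩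
        · exact (Finset.lt_inf'_iff _).2 fun i _ => hδ i
        · intro i hi
          have h1 : Finset.univ.inf' Finset.univ_nonempty δ ≤ δ i :=
            Finset.inf'_le _ (Finset.mem_univ i)
          have h2 : δ i = (β i - ⟪a i, x⟫) / (|⟪a i, x⟫ - ⟪a i, y⟫| + 1) := if_neg hi
          set ε := Finset.univ.inf' Finset.univ_nonempty δ
          have hεpos : 0 < ε := (Finset.lt_inf'_iff _).2 fun j _ => hδ j
          have hlt : ⟪a i, x⟫ < β i := lt_of_le_of_ne (hxC i) hi
          have habs : ⟪a i, x⟫ - ⟪a i, y⟫ ≤ |⟪a i, x⟫ - ⟪a i, y⟫| := le_abs_self _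
          have habs0 : (0:ℝ) ≤ |⟪a i, x⟫ - ⟪a i, y⟫| := abs_nonneg _
          have hkey : δ i * (|⟪a i, x⟫ - ⟪a i, y⟫| + 1) = β i - ⟪a i, x⟫ := by
            rw [h2]; field_simp
          nlinarith [mul_le_mul_of_nonneg_right h1 (by linarith : (0:ℝ) ≤ |⟪a i, x⟫ - ⟪a i, y⟫| + 1)]
    set w := x + ε • (x - y) with hwdef
    have hwC : w ∈ C := by
      intro i
      have hw : ⟪a i, w⟫ = ⟪a i, x⟫ + ε * (⟪a i, x⟫ - ⟪a i, y⟫) := by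
        simp [hwdef, inner_add_right, real_inner_smul_right, inner_sub_right]
      rcases eq_or_ne ⟪a i, x⟫ (β i) with h | h
      · have hyi := hy.2 i h
        rw [hw, h, hyi]
        simp
      · rw [hw]; exact hε i h
    have hseg : x ∈ openSegment ℝ w y := by
      refine ⟨1 / (1 + ε), ε / (1 + ε), by positivity, by positivity, ?_, ?_⟩
      · field_simp
      · rw [hwdef]
        have h1ε : (1:ℝ) + ε ≠ 0 := by positivity
        match_scalars <;> field_simp <;> ring
    exact (hF.2 w hwC y hyC ⟨x, hseg, hx⟩).2
  have hrep : ∀ F, IsFace C F → F = ⋃ I ∈ {I | P I ⊆ F}, P I := by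
    intro F hF
    apply Set.Subset.antisymm
    · intro x hx
      exact Set.mem_biUnion (key F hF x hx) ⟨hF.1 hx, fun i hi => hi⟩
    · exact Set.iUnion₂_subset fun I hI => hI
  have hsub : {F | IsFace C F} ⊆ Set.range (fun J : Set (Set (Fin m)) => ⋃ I ∈ J, P I) := by
    intro F hF
    exact ⟨{I | P I ⊆ F}, (hrep F hF).symm⟩
  exact (Set.finite_range _).subset hsub

/-- Characterization of polyhedrality via a finite set of pairs. -/
lemma isPolyhedral_of_pairs (C : Set E) (S : Set (E × ℝ)) (hS : S.Finite)
    (h0 : ∀ s ∈ S, s.1 ≠ 0) (hC : C = {x | ∀ s ∈ S, ⟪s.1, x⟫ ≤ s.2}) :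
    IsPolyhedral C := by
  haveI := hS.fintype
  set e := Fintype.equivFin S with he
  refine ⟨Fintype.card S, fun i => ((e.symm i : S) : E × ℝ).1,
    fun i => ((e.symm i : S) : E × ℝ).2, fun i => h0 _ (e.symm i).2, ?_⟩
  rw [hC]
  ext x
  simp only [Set.mem_setOf_eq]
  constructor
  · intro h i
    exact h _ (e.symm i).2
  · intro h s hs
    have := h (e ⟨s, hs⟩)
    simpa using this

end Helpers

section Reverse

lemma le_on_of_lt_on_interior {W : Type*} [NormedAddCommGroup W] [NormedSpace ℝ W]
    {s : Set W} (hs : Convex ℝ s) {f : W →L[ℝ] ℝ} {c : ℝ} {x : W}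
    (hx : x ∈ interior s) (h : ∀ w ∈ interior s, f w < c) {w : W} (hw : w ∈ s) :
    f w ≤ c := by
  have hev : ∀ᶠ t in nhdsWithin (1:ℝ) (Set.Iio 1), f ((1 - t) • x + t • w) ≤ c := by
    filter_upwards [Ioo_mem_nhdsLT_of_mem (Set.mem_Ioc.2 ⟨zero_lt_one, le_refl 1⟩)] with t ht
    exact (h _ (hs.combo_interior_closure_mem_interior hx (subset_closure hw)
      (by linarith [ht.2]) ht.1.le (by ring))).le
  have hten : Filter.Tendsto (fun t : ℝ => f ((1 - t) • x + t • w))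
      (nhdsWithin (1:ℝ) (Set.Iio 1)) (nhds (f w)) := by
    have hc : Continuous fun t : ℝ => f ((1 - t) • x + t • w) := by continuity
    have h2 := hc.tendsto 1
    simp only [sub_self, zero_smul, one_smul, zero_add] at h2
    exact h2.mono_left nhdsWithin_le_nhds
  exact le_of_tendsto hten hev

set_option maxHeartbeats 1000000 in
lemma isPolyhedral_of_finite_faces {E : Type*} [NormedAddCommGroup E] [InnerProductSpace ℝ E]
    [FiniteDimensional ℝ E] {C : Set E} (hCne : C.Nonempty) (hCcl : IsClosed C)
    (hC : Convex ℝ C) (hfin : {F | IsFace C F}.Finite) : IsPolyhedral C := by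
  classical
  obtain ⟨p, hp⟩ := hCne
  set D : Set E := (fun x => x - p) '' C with hD
  have hDW : D = (fun x => x + p) ⁻¹' C := by
    ext d
    constructor
    · rintro ⟨c, hc, rfl⟩; simpa using hc
    · intro hd; exact ⟨d + p, hd, add_sub_cancel_right d p⟩
  have hDcl : IsClosed D := hDW ▸ hCcl.preimage (continuous_id.add continuous_const)
  have hDcv : Convex ℝ D := by
    have h : D = (fun x => -p + x) '' C := by
      ext d; simp [hD, neg_add_eq_sub]
    rw [h]; exact hC.translate (-p)
  have h0D : (0:E) ∈ D := ⟨p, hp, sub_self p⟩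
  set W : Submodule ℝ E := Submodule.span ℝ D with hW
  have hDsubW : D ⊆ (W : Set E) := Submodule.subset_span
  set D' : Set W := Subtype.val ⁻¹' D with hD'
  have hD'cl : IsClosed D' := hDcl.preimage continuous_subtype_val
  have hD'cv : Convex ℝ D' := hDcv.linear_preimage W.subtype
  have h0D' : (0 : W) ∈ D' := by
    show ((0 : W) : E) ∈ D
    simpa using h0D
  have hspan : Submodule.span ℝ D' = (⊤ : Submodule ℝ W) := by
    apply Submodule.map_injective_of_injective W.injective_subtype
    rw [Submodule.map_span, Submodule.map_top, Submodule.range_subtype]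
    have himg : W.subtype '' D' = D := by
      ext x
      constructor
      · rintro ⟨y, hy, rfl⟩; exact hy
      · intro hx; exact ⟨⟨x, hDsubW hx⟩, hx, rfl⟩
    rw [himg]
  have haff : affineSpan ℝ D' = ⊤ := by
    rw [AffineSubspace.affineSpan_eq_top_iff_vectorSpan_eq_top_of_nonempty ℝ W W ⟨0, h0D'⟩]
    apply eq_top_iff.2
    rw [← hspan]
    apply Submodule.span_le.2
    intro d hd
    simpa using vsub_mem_vectorSpan ℝ hd h0D'
  obtain ⟨x₀', hx₀'⟩ : (interior D').Nonempty :=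
    (hD'cv.interior_nonempty_iff_affineSpan_eq_top).2 haff
  have hx₀'D : x₀' ∈ D' := interior_subset hx₀'
  have hmemC : ∀ w : W, w ∈ D' → p + (w : E) ∈ C := by
    intro w hw
    obtain ⟨c, hc, hc'⟩ := hw
    rw [← hc']
    simpa using hc
  set x₀ : E := p + (x₀' : E) with hx₀
  have hx₀C : x₀ ∈ C := hmemC _ hx₀'D
  set 𝔊 : Set (Set E) := {G | ∃ s : E × ℝ, s.1 ≠ 0 ∧ (∀ x ∈ C, ⟪s.1, x⟫ ≤ s.2) ∧
    ⟪s.1, x₀⟫ < s.2 ∧ G = C ∩ {x | ⟪s.1, x⟫ = s.2}} with h𝔊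
  have h𝔊fin : 𝔊.Finite := by
    apply hfin.subset
    rintro G ⟨s, -, hsupp, -, rfl⟩
    exact isFace_exposed hsupp
  set pick : Set E → E × ℝ := fun G =>
    if h : ∃ s : E × ℝ, s.1 ≠ 0 ∧ (∀ x ∈ C, ⟪s.1, x⟫ ≤ s.2) ∧
      ⟪s.1, x₀⟫ < s.2 ∧ G = C ∩ {x | ⟪s.1, x⟫ = s.2} then h.choose else (0, 0) with hpick
  have hpick𝔊 : ∀ G ∈ 𝔊, (pick G).1 ≠ 0 ∧ (∀ x ∈ C, ⟪(pick G).1, x⟫ ≤ (pick G).2) ∧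
      ⟪(pick G).1, x₀⟫ < (pick G).2 ∧ G = C ∩ {x | ⟪(pick G).1, x⟫ = (pick G).2} := by
    intro G hG
    have h : ∃ s : E × ℝ, s.1 ≠ 0 ∧ (∀ x ∈ C, ⟪s.1, x⟫ ≤ s.2) ∧
      ⟪s.1, x₀⟫ < s.2 ∧ G = C ∩ {x | ⟪s.1, x⟫ = s.2} := hG
    rw [hpick]
    simp only [dif_pos h]
    exact h.choose_spec
  set b := stdOrthonormalBasis ℝ (Wᗮ : Submodule ℝ E) with hb
  set S₁ : Set (E × ℝ) := Set.range (fun i => (((b i) : E), ⟪((b i) : E), p⟫)) with hS₁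
  set S₂ : Set (E × ℝ) := Set.range (fun i => (-((b i) : E), -⟪((b i) : E), p⟫)) with hS₂
  set S₃ : Set (E × ℝ) := pick '' 𝔊 with hS₃
  set S := S₁ ∪ S₂ ∪ S₃ with hS
  have hSfin : S.Finite :=
    ((Set.finite_range _).union (Set.finite_range _)).union (h𝔊fin.image _)
  have hb0 : ∀ i, ((b i : E)) ≠ 0 := by
    intro i h
    have h1 : ‖b i‖ = 1 := b.orthonormal.1 i
    have h2 : b i = 0 := Submodule.coe_eq_zero.1 h
    rw [h2] at h1
    simp at h1
  have h0S : ∀ s ∈ S, s.1 ≠ 0 := by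
    intro s hs
    rw [hS, Set.mem_union, Set.mem_union, hS₁, hS₂, hS₃] at hs
    rcases hs with (hs | hs) | hs
    · obtain ⟨i, rfl⟩ := hs; exact hb0 i
    · obtain ⟨i, rfl⟩ := hs; exact neg_ne_zero.2 (hb0 i)
    · obtain ⟨G, hG, rfl⟩ := hs; exact (hpick𝔊 G hG).1
  refine isPolyhedral_of_pairs C S hSfin h0S ?_
  ext y
  simp only [Set.mem_setOf_eq]
  constructor
  · -- C ⊆ intersection of halfspaces
    intro hy s hs
    have hyW : y - p ∈ W := hDsubW ⟨y, hy, rfl⟩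
    rw [hS, Set.mem_union, Set.mem_union, hS₁, hS₂, hS₃] at hs
    rcases hs with (hs | hs) | hs
    · obtain ⟨i, rfl⟩ := hs
      have horth : ⟪y - p, (b i : E)⟫ = 0 := by
        have h2 := (b i).2
        rw [Submodule.mem_orthogonal] at h2
        exact h2 _ hyW
      have : ⟪(b i : E), y⟫ = ⟪(b i : E), p⟫ := by
        have h3 : ⟪(b i : E), y - p⟫ = 0 := by rw [real_inner_comm]; exact horth
        rw [inner_sub_right] at h3
        linarith
      exact le_of_eq this
    · obtain ⟨i, rfl⟩ := hs
      have horth : ⟪y - p, (b i : E)⟫ = 0 := by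
        have h2 := (b i).2
        rw [Submodule.mem_orthogonal] at h2
        exact h2 _ hyW
      have h4 : ⟪(b i : E), y⟫ = ⟪(b i : E), p⟫ := by
        have h3 : ⟪(b i : E), y - p⟫ = 0 := by rw [real_inner_comm]; exact horth
        rw [inner_sub_right] at h3
        linarith
      show ⟪-(b i : E), y⟫ ≤ -⟪(b i : E), p⟫
      rw [inner_neg_left, h4]
    · obtain ⟨G, hG, rfl⟩ := hs
      exact (hpick𝔊 G hG).2.1 y hy
  · -- intersection of halfspaces ⊆ C
    intro hy
    by_contra hyC
    have hby : ∀ i, ⟪(b i : E), y - p⟫ = 0 := by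
      intro i
      have h1 : ⟪(b i : E), y⟫ ≤ ⟪(b i : E), p⟫ :=
        hy _ (Set.mem_union_left _ (Set.mem_union_left _ ⟨i, rfl⟩))
      have h2 : ⟪-(b i : E), y⟫ ≤ -⟪(b i : E), p⟫ :=
        hy _ (Set.mem_union_left _ (Set.mem_union_right _ ⟨i, rfl⟩))
      rw [inner_neg_left] at h2
      rw [inner_sub_right]
      linarith
    have hyW : y - p ∈ W := by
      have hWorth : y - p ∈ Wᗮᗮ := by
        rw [Submodule.mem_orthogonal]
        intro u hu
        have hrepr : ∑ i, ⟪b i, (⟨u, hu⟩ : Wᗮ)⟫ • b i = (⟨u, hu⟩ : Wᗮ) :=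
          b.sum_repr' ⟨u, hu⟩
        have hu' : u = ∑ i, ⟪b i, (⟨u, hu⟩ : Wᗮ)⟫ • (b i : E) := by
          conv_lhs => rw [show u = ((⟨u, hu⟩ : Wᗮ) : E) from rfl, ← hrepr]
          push_cast
          rfl
        rw [hu', sum_inner]
        apply Finset.sum_eq_zero
        intro i _
        rw [real_inner_smul_left, hby i, mul_zero]
      rwa [Submodule.orthogonal_orthogonal] at hWorth
    set y' : W := ⟨y - p, hyW⟩ with hy'
    have hy'D : y' ∉ D' := by
      intro h
      obtain ⟨c, hc, hc'⟩ := h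
      apply hyC
      have hcy : c = y := by
        have : c - p = y - p := hc'
        exact sub_left_injective this
      rwa [← hcy]
    set γ : ℝ → W := fun t => x₀' + t • (y' - x₀') with hγ
    have hγcont : Continuous γ := continuous_const.add (continuous_id.smul continuous_const)
    set T : Set ℝ := {t | t ∈ Set.Icc (0:ℝ) 1 ∧ γ t ∈ D'} with hT
    have hTne : T.Nonempty := ⟨0, ⟨le_refl 0, zero_le_one⟩, by
      show γ 0 ∈ D'
      simp only [hγ, zero_smul, add_zero]
      exact hx₀'D⟩
    have hTcl : IsClosed T := IsClosed.inter isClosed_Icc (hD'cl.preimage hγcont)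
    have hTbdd : BddAbove T := ⟨1, fun t ht => ht.1.2⟩
    set t₀ := sSup T with ht₀
    have ht₀T : t₀ ∈ T := hTcl.csSup_mem hTne hTbdd
    have ht₀0 : 0 ≤ t₀ := ht₀T.1.1
    have ht₀1 : t₀ < 1 := by
      rcases lt_or_eq_of_le ht₀T.1.2 with h | h
      · exact h
      · exfalso
        apply hy'D
        have h2 := ht₀T.2
        rw [h] at h2
        simpa [hγ, one_smul] using h2
    set z' := γ t₀ with hz'
    have hz'D : z' ∈ D' := ht₀T.2
    have hz'int : z' ∉ interior D' := by
      intro h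
      have hopen : IsOpen (γ ⁻¹' interior D') := isOpen_interior.preimage hγcont
      obtain ⟨ε, hε, hball⟩ := Metric.isOpen_iff.1 hopen t₀ h
      set t₁ := min (t₀ + ε / 2) ((t₀ + 1) / 2) with ht₁
      have ht₁gt : t₀ < t₁ := lt_min (by linarith) (by linarith)
      have ht₁le : t₁ ≤ t₀ + ε / 2 := min_le_left _ _
      have ht₁lt1 : t₁ ≤ 1 := le_trans (min_le_right _ _) (by linarith)
      have ht₁ball : t₁ ∈ Metric.ball t₀ ε := by
        rw [Metric.mem_ball, Real.dist_eq, abs_of_pos (by linarith)]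
        linarith
      have ht₁T : t₁ ∈ T := ⟨⟨by linarith, ht₁lt1⟩, interior_subset (hball ht₁ball)⟩
      exact absurd (le_csSup hTbdd ht₁T) (not_le.2 ht₁gt)
    obtain ⟨f, hf⟩ := geometric_hahn_banach_open_point hD'cv.interior isOpen_interior hz'int
    have hfle : ∀ w ∈ D', f w ≤ f z' := fun w hw =>
      le_on_of_lt_on_interior hD'cv hx₀' hf hw
    have hfx₀ : f x₀' < f z' := hf _ hx₀'
    set g := (InnerProductSpace.toDual ℝ W).symm f with hg
    have hgapp : ∀ w : W, ⟪g, w⟫ = f w := fun w => InnerProductSpace.toDual_symm_apply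
    set a : E := (g : E) with ha
    have hinner : ∀ w : W, ⟪a, (w : E)⟫ = f w := by
      intro w
      rw [ha, ← Submodule.coe_inner]
      exact hgapp w
    set z : E := p + (z' : E) with hz
    have hzC : z ∈ C := hmemC _ hz'D
    have hsplit : ∀ x : E, (hx : x - p ∈ W) → ⟪a, x⟫ = ⟪a, p⟫ + f ⟨x - p, hx⟩ := by
      intro x hx
      rw [← hinner]
      rw [← inner_add_right]
      norm_num
    have hsupp : ∀ x ∈ C, ⟪a, x⟫ ≤ ⟪a, z⟫ := by
      intro x hx
      have hxW : x - p ∈ W := hDsubW ⟨x, hx, rfl⟩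
      have hxD' : (⟨x - p, hxW⟩ : W) ∈ D' := show x - p ∈ D from ⟨x, hx, rfl⟩
      have h1 := hsplit x hxW
      have h2 : ⟪a, z⟫ = ⟪a, p⟫ + f z' := by
        have h3 := hsplit z (by rw [hz]; simpa using z'.2)
        rw [h3]
        congr 1
        apply congrArg
        apply Subtype.ext
        simp [hz]
      rw [h1, h2]
      have := hfle _ hxD'
      linarith
    have hstrict : ⟪a, x₀⟫ < ⟪a, z⟫ := by
      have h1 : x₀ - p ∈ W := by rw [hx₀]; simpa using x₀'.2
      have h2 := hsplit x₀ h1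
      have h3 : ⟪a, z⟫ = ⟪a, p⟫ + f z' := by
        have h4 := hsplit z (by rw [hz]; simpa using z'.2)
        rw [h4]
        congr 1
        apply congrArg
        apply Subtype.ext
        simp [hz]
      have h5 : (⟨x₀ - p, h1⟩ : W) = x₀' := by
        apply Subtype.ext
        simp [hx₀]
      rw [h2, h3, h5]
      linarith
    have ha0 : a ≠ 0 := by
      intro h
      rw [h] at hstrict
      simp at hstrict
    have hG𝔊 : (C ∩ {x | ⟪a, x⟫ = ⟪a, z⟫}) ∈ 𝔊 := ⟨(a, ⟪a, z⟫), ha0, hsupp, hstrict, rfl⟩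
    obtain ⟨s, hsS, hs0, hssupp, hsx₀, hsG⟩ :
        ∃ s ∈ S, s.1 ≠ 0 ∧ (∀ x ∈ C, ⟪s.1, x⟫ ≤ s.2) ∧ ⟪s.1, x₀⟫ < s.2 ∧
          C ∩ {x | ⟪a, x⟫ = ⟪a, z⟫} = C ∩ {x | ⟪s.1, x⟫ = s.2} :=
      ⟨pick _, Set.mem_union_right _ ⟨_, hG𝔊, rfl⟩, hpick𝔊 _ hG𝔊⟩
    have hzG : z ∈ C ∩ {x | ⟪a, x⟫ = ⟪a, z⟫} := ⟨hzC, rfl⟩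
    rw [hsG] at hzG
    have hz2 : ⟪s.1, z⟫ = s.2 := hzG.2
    have hy2 : ⟪s.1, y⟫ ≤ s.2 := hy s hsS
    have hzeq : z = x₀ + t₀ • (y - x₀) := by
      have hcoe : (z' : E) = (x₀' : E) + t₀ • ((y' : E) - (x₀' : E)) := by
        rw [hz', hγ]
        push_cast
        rfl
      rw [hz, hcoe, hx₀, hy']
      show p + ((x₀' : E) + t₀ • ((y - p) - (x₀' : E))) = (p + (x₀' : E)) + t₀ • (y - (p + (x₀' : E)))
      rw [sub_sub]
      abel
    have final : ⟪s.1, z⟫ < s.2 := by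
      have h1 : ⟪s.1, z⟫ = ⟪s.1, x₀⟫ + t₀ * (⟪s.1, y⟫ - ⟪s.1, x₀⟫) := by
        rw [hzeq]
        simp [inner_add_right, real_inner_smul_right, inner_sub_right]
      have h2 : t₀ * ⟪s.1, y⟫ ≤ t₀ * s.2 := mul_le_mul_of_nonneg_left hy2 ht₀0
      have h3 : (1 - t₀) * ⟪s.1, x₀⟫ < (1 - t₀) * s.2 :=
        mul_lt_mul_of_pos_left hsx₀ (by linarith)
      have h4 : t₀ * (⟪s.1, y⟫ - ⟪s.1, x₀⟫) = t₀ * ⟪s.1, y⟫ - t₀ * ⟪s.1, x₀⟫ := mul_sub _ _ _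
      have h5 : (1 - t₀) * ⟪s.1, x₀⟫ = ⟪s.1, x₀⟫ - t₀ * ⟪s.1, x₀⟫ := by ring
      have h6 : (1 - t₀) * s.2 = s.2 - t₀ * s.2 := by ring
      rw [h1, h4]
      linarith [h2, h3]
    exact absurd hz2 (ne_of_lt final)

end Reverse

theorem polyhedral_iff_finitely_many_faces {n : ℕ}
    (C : Set (EuclideanSpace ℝ (Fin n))) (hCne : C.Nonempty) (hCcl : IsClosed C)
    (hC : Convex ℝ C) :
    IsPolyhedral C ↔ {F | IsFace C F}.Finite := by
  constructor
  · rintro ⟨m, a, β, -, rfl⟩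
    exact finite_faces_of_polyhedral a β
  · intro h
    exact isPolyhedral_of_finite_faces hCne hCcl hC h
end

section
/- Let X be a real Hilbert space, let C = {x ∈ X : ⟨a_i, x⟩ ≤ β_i for all i ∈ I} be nonempty with I finite, a_i ∈ X \ {0}, β_i ∈ ℝ. Let K be a closed linear subspace of ⋂_{i∈I} ker a_i and set D := C ∩ K^⊥. Then D is nonempty and P_C = P_K + P_D ∘ P_{K^⊥}. -/
open scoped RealInnerProductSpace

lemma isProj_unique {X : Type*} [NormedAddCommGroup X] [InnerProductSpace ℝ X]
    {C : Set X} (hc : Convex ℝ C) {x p q : X}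
    (hp : IsProj C x p) (hq : IsProj C x q) : p = q := by
  have hm : (1/2 : ℝ) • p + (1/2 : ℝ) • q ∈ C :=
    hc hp.1 hq.1 (by norm_num) (by norm_num) (by norm_num)
  have h1 := hp.2 _ hm
  have h2 := hq.2 _ hm
  have hpar := parallelogram_law_with_norm ℝ (x - p) (x - q)
  have he : (x - p) + (x - q) = (2:ℝ) • (x - ((1/2 : ℝ) • p + (1/2 : ℝ) • q)) := by
    module
  rw [he] at hpar
  have h3 : ‖(2:ℝ) • (x - ((1/2 : ℝ) • p + (1/2 : ℝ) • q))‖ =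
      2 * ‖x - ((1/2 : ℝ) • p + (1/2 : ℝ) • q)‖ := by
    rw [norm_smul]; simp
  rw [dist_eq_norm, dist_eq_norm] at h1 h2
  have h4e : x - p - (x - q) = q - p := by abel
  have h4 : ‖x - p - (x - q)‖ = ‖p - q‖ := by rw [h4e, norm_sub_rev]
  rw [h3, h4] at hpar
  have h5 : ‖p - q‖ = 0 := by
    nlinarith [norm_nonneg (p - q), norm_nonneg (x - p),
      norm_nonneg (x - q), norm_nonneg (x - ((1/2 : ℝ) • p + (1/2 : ℝ) • q))]
  exact sub_eq_zero.mp (norm_eq_zero.mp h5)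

lemma isProj_orthogonalProjection {X : Type*} [NormedAddCommGroup X] [InnerProductSpace ℝ X]
    (K : Submodule ℝ X) [K.HasOrthogonalProjection] (x : X) :
    IsProj (K : Set X) x (K.orthogonalProjection x) := by
  refine ⟨(K.orthogonalProjection x).2, fun y hy => ?_⟩
  have horth : ⟪x - K.orthogonalProjection x, (K.orthogonalProjection x : X) - y⟫ = 0 := by
    rw [real_inner_comm]
    exact (K.mem_orthogonal _).1 (K.sub_starProjection_mem_orthogonal x) _
      (sub_mem (K.orthogonalProjection x).2 hy)
  have : ‖x - y‖ ^ 2 = ‖x - K.orthogonalProjection x‖ ^ 2 +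
      ‖(K.orthogonalProjection x : X) - y‖ ^ 2 := by
    have := norm_add_sq_real (x - K.orthogonalProjection x) ((K.orthogonalProjection x : X) - y)
    rw [horth] at this
    simpa [sub_add_sub_cancel] using this
  rw [dist_eq_norm, dist_eq_norm]
  nlinarith [norm_nonneg (x - y), norm_nonneg (x - (K.orthogonalProjection x : X)),
    sq_nonneg ‖(K.orthogonalProjection x : X) - y‖]

theorem proj_polyhedron_decomposition
    {X : Type*} [NormedAddCommGroup X] [InnerProductSpace ℝ X] [CompleteSpace X]
    {ι : Type*} [Fintype ι] (a : ι → X) (β : ι → ℝ) (ha : ∀ i, a i ≠ 0)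
    (C : Set X) (hC : C = {x | ∀ i, ⟪a i, x⟫ ≤ β i}) (hCne : C.Nonempty)
    (K : Submodule ℝ X) (hKcl : IsClosed (K : Set X))
    (hKker : ∀ i, ∀ x ∈ K, ⟪a i, x⟫ = 0)
    (D : Set X) (hD : D = C ∩ (Kᗮ : Set X)) :
    D.Nonempty ∧
      ∀ x pC pK pKp pD : X, IsProj C x pC → IsProj (K : Set X) x pK →
        IsProj (Kᗮ : Set X) x pKp → IsProj D pKp pD → pC = pK + pD := by
  haveI : CompleteSpace K := hKcl.completeSpace_coe
  -- projection of any point of C onto Kᗮ lies in D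
  have hproj : ∀ y ∈ C, (Kᗮ.orthogonalProjection y : X) ∈ D := by
    intro y hy
    rw [hD]
    refine ⟨?_, (Kᗮ.orthogonalProjection y).2⟩
    rw [hC]
    intro i
    have hsum : (K.orthogonalProjection y : X) + (Kᗮ.orthogonalProjection y : X) = y :=
      K.starProjection_add_starProjection_orthogonal y
    have hker : ⟪a i, (K.orthogonalProjection y : X)⟫ = 0 :=
      hKker i _ (K.orthogonalProjection y).2
    have hyi : ⟪a i, y⟫ ≤ β i := by rw [hC] at hy; exact hy i
    have : ⟪a i, y⟫ = ⟪a i, (K.orthogonalProjection y : X)⟫ +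
        ⟪a i, (Kᗮ.orthogonalProjection y : X)⟫ := by
      rw [← inner_add_right, hsum]
    rw [hker] at this
    linarith
  have hCconv : Convex ℝ C := by
    rw [hC]
    intro u hu v hv s t hs ht hst i
    simp only [Set.mem_setOf_eq] at hu hv ⊢
    rw [inner_add_right, real_inner_smul_right, real_inner_smul_right]
    have h1 := add_le_add (mul_le_mul_of_nonneg_left (hu i) hs)
      (mul_le_mul_of_nonneg_left (hv i) ht)
    have h2 : s * β i + t * β i = β i := by rw [← add_mul, hst, one_mul]
    linarith
  constructor
  · obtain ⟨x₀, hx₀⟩ := hCne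
    exact ⟨_, hproj x₀ hx₀⟩
  intro x pC pK pKp pD hpC hpK hpKp hpD
  have hDconv : Convex ℝ D := by rw [hD]; exact hCconv.inter (Kᗮ).convex
  -- identify pK and pKp
  have hpK' : pK = (K.orthogonalProjection x : X) :=
    isProj_unique K.convex hpK (isProj_orthogonalProjection K x)
  have hpKp' : pKp = (Kᗮ.orthogonalProjection x : X) :=
    isProj_unique (Kᗮ).convex hpKp (isProj_orthogonalProjection Kᗮ x)
  have hx : pK + pKp = x := by
    rw [hpK', hpKp']; exact K.starProjection_add_starProjection_orthogonal x
  have hpDD : pD ∈ D := hpD.1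
  have hpDC : pD ∈ C := by rw [hD] at hpDD; exact hpDD.1
  have hpDKp : pD ∈ Kᗮ := by rw [hD] at hpDD; exact hpDD.2
  -- pK + pD is the projection of x onto C
  have hmain : IsProj C x (pK + pD) := by
    constructor
    · rw [hC]
      intro i
      have h1 : ⟪a i, pK⟫ = 0 := hKker i _ hpK.1
      have h2 : ⟪a i, pD⟫ ≤ β i := by rw [hC] at hpDC; exact hpDC i
      simp only [Set.mem_setOf_eq, inner_add_right, h1, zero_add]
      exact h2
    · intro y hy
      set yK := (K.orthogonalProjection y : X)
      set yKp := (Kᗮ.orthogonalProjection y : X)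
      have hysum : yK + yKp = y := K.starProjection_add_starProjection_orthogonal y
      have hyKpD : yKp ∈ D := hproj y hy
      -- orthogonal decomposition of x - y
      have hdec : x - y = (pK - yK) + (pKp - yKp) := by rw [← hx, ← hysum]; abel
      have horth : ⟪pK - yK, pKp - yKp⟫ = 0 := by
        have h1 : pK - yK ∈ K := sub_mem hpK.1 (K.orthogonalProjection y).2
        have h2 : pKp - yKp ∈ Kᗮ := sub_mem hpKp.1 (Kᗮ.orthogonalProjection y).2
        exact h2 _ h1
      have hpyth : ‖x - y‖ ^ 2 = ‖pK - yK‖ ^ 2 + ‖pKp - yKp‖ ^ 2 := by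
        rw [hdec]
        have := norm_add_sq_real (pK - yK) (pKp - yKp)
        rw [horth] at this
        linarith
      have h1 : dist pKp pD ≤ dist pKp yKp := hpD.2 _ hyKpD
      have h2 : x - (pK + pD) = pKp - pD := by rw [← hx]; abel
      rw [dist_eq_norm, dist_eq_norm, h2]
      rw [dist_eq_norm, dist_eq_norm] at h1
      nlinarith [norm_nonneg (pKp - pD), norm_nonneg (pKp - yKp), norm_nonneg (x - y),
        sq_nonneg ‖pK - yK‖]
  exact isProj_unique hCconv hpC hmain
end

section
/- Let a ≠ b in ℝ and let (λ_n) be a sequence with 1 < λ_n < 2 for all n, λ_n → 2, and Σ_n (2 − λ_n) < ∞. For the alternating relaxed projection iteration x_{2n+1} = (1−λ_{2n})x_{2n} + λ_{2n}a, x_{2n+2} = (1−λ_{2n+1})x_{2n+1} + λ_{2n+1}b with arbitrary x₀ ∈ ℝ, one has x_{2n} → sign(b−a)·∞ and x_{2n+1} → sign(a−b)·∞; in particular |x_n| → ∞. -/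
open Filter

private lemma prod_one_sub_ge (s : Finset ℕ) (f : ℕ → ℝ) (h0 : ∀ i ∈ s, 0 ≤ f i)
    (h1 : ∀ i ∈ s, f i ≤ 1) : 1 - ∑ i ∈ s, f i ≤ ∏ i ∈ s, (1 - f i) := by
  induction s using Finset.cons_induction with
  | empty => simp
  | cons a s ha ih =>
    rw [Finset.prod_cons, Finset.sum_cons]
    have hs0 : 0 ≤ ∑ i ∈ s, f i :=
      Finset.sum_nonneg fun i hi => h0 i (Finset.mem_cons_of_mem hi)
    have h0a : 0 ≤ f a := h0 a (Finset.mem_cons_self _ _)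
    have h1a : f a ≤ 1 := h1 a (Finset.mem_cons_self _ _)
    have hih := ih (fun i hi => h0 i (Finset.mem_cons_of_mem hi))
      (fun i hi => h1 i (Finset.mem_cons_of_mem hi))
    nlinarith [mul_le_mul_of_nonneg_left hih (by linarith : (0:ℝ) ≤ 1 - f a),
      mul_nonneg h0a hs0]

private lemma key (a b : ℝ) (hab : a < b) (lam : ℕ → ℝ)
    (hlam : ∀ n, 1 < lam n ∧ lam n < 2)
    (hsum : Summable (fun n => 2 - lam n))
    (x : ℕ → ℝ)
    (hodd : ∀ n, x (2 * n + 1) = (1 - lam (2 * n)) * x (2 * n) + lam (2 * n) * a)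
    (heven : ∀ n, x (2 * n + 2) = (1 - lam (2 * n + 1)) * x (2 * n + 1) + lam (2 * n + 1) * b) :
    Tendsto (fun n => x (2 * n)) atTop atTop ∧
      Tendsto (fun n => x (2 * n + 1)) atTop atBot := by
  set c : ℝ := b - a with hc_def
  have hc : 0 < c := by simp [hc_def]; linarith
  set μ : ℕ → ℝ := fun n => (lam (2 * n) - 1) * (lam (2 * n + 1) - 1) with hμ_def
  have hμ0 : ∀ n, 0 < μ n := fun n =>
    mul_pos (by linarith [(hlam (2 * n)).1]) (by linarith [(hlam (2 * n + 1)).1])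
  have hμ1 : ∀ n, μ n ≤ 1 := by
    intro n
    have h1 := hlam (2 * n); have h2 := hlam (2 * n + 1)
    have := mul_le_one₀ (a := lam (2 * n) - 1) (b := lam (2 * n + 1) - 1)
      (by linarith [h1.2]) (by linarith [h2.1]) (by linarith [h2.2])
    exact this
  set P : ℕ → ℝ := fun n => ∏ k ∈ Finset.range n, μ k with hP_def
  have hP0 : ∀ n, 0 < P n := fun n => Finset.prod_pos (fun k _ => hμ0 k)
  have hPsucc : ∀ n, P (n + 1) = P n * μ n := fun n => Finset.prod_range_succ μ n
  have hP1 : ∀ n, P n ≤ 1 := fun n =>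
    Finset.prod_le_one (fun k _ => (hμ0 k).le) (fun k _ => hμ1 k)
  have hPanti : ∀ m n, m ≤ n → P n ≤ P m := by
    intro m n hmn
    have h := Finset.prod_range_mul_prod_Ico μ hmn
    have hq : ∏ k ∈ Finset.Ico m n, μ k ≤ 1 :=
      Finset.prod_le_one (fun k _ => (hμ0 k).le) (fun k _ => hμ1 k)
    have hq0 : 0 < ∏ k ∈ Finset.Ico m n, μ k := Finset.prod_pos (fun k _ => hμ0 k)
    calc P n = P m * ∏ k ∈ Finset.Ico m n, μ k := h.symm
      _ ≤ P m * 1 := by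
          apply mul_le_mul_of_nonneg_left hq (hP0 m).le
      _ = P m := mul_one _
  set w : ℕ → ℝ := fun n => x (2 * n) - a with hw_def
  have hw : ∀ n, w (n + 1) = μ n * w n + lam (2 * n + 1) * c := by
    intro n
    have h1 := hodd n
    have h2 := heven n
    have e : 2 * (n + 1) = 2 * n + 2 := by ring
    simp only [hw_def, hμ_def, hc_def, e, h2, h1]
    ring
  set z : ℕ → ℝ := fun n => w n / P n with hz_def
  have hz : ∀ n, z (n + 1) = z n + lam (2 * n + 1) * c / P (n + 1) := by
    intro n
    have hPn := (hP0 n).ne'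
    have hμn := (hμ0 n).ne'
    simp only [hz_def, hw n, hPsucc n]
    field_simp
  have hzge : ∀ n : ℕ, z 0 + n * c ≤ z n := by
    intro n
    induction n with
    | zero => simp
    | succ n ih =>
      have h1 : c ≤ lam (2 * n + 1) * c := by nlinarith [(hlam (2 * n + 1)).1]
      have hβ0 : 0 < lam (2 * n + 1) * c := by linarith
      have h2 : lam (2 * n + 1) * c ≤ lam (2 * n + 1) * c / P (n + 1) := by
        rw [le_div_iff₀ (hP0 (n + 1))]
        nlinarith [hP1 (n + 1)]
      rw [hz n]
      push_cast
      nlinarith [le_trans h1 h2]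
  -- uniform lower bound on P
  set g : ℕ → ℝ := fun k => (2 - lam (2 * k)) + (2 - lam (2 * k + 1)) with hg_def
  have hg0 : ∀ k, 0 ≤ g k := by
    intro k
    have h1 := (hlam (2 * k)).2; have h2 := (hlam (2 * k + 1)).2
    simp only [hg_def]; linarith
  have hgsum : Summable g := by
    have h1 : Summable (fun k : ℕ => 2 - lam (2 * k)) :=
      hsum.comp_injective (fun m n h => by omega)
    have h2 : Summable (fun k : ℕ => 2 - lam (2 * k + 1)) :=
      hsum.comp_injective (fun m n h => by omega)
    exact h1.add h2
  have hδg : ∀ k, 1 - μ k ≤ g k := by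
    intro k
    have h1 := hlam (2 * k); have h2 := hlam (2 * k + 1)
    simp only [hμ_def, hg_def]
    nlinarith [h1.1, h1.2, h2.1, h2.2]
  obtain ⟨N, hN⟩ := ((tendsto_sum_nat_add g).eventually_lt_const
    (show (0:ℝ) < 1/2 by norm_num)).exists
  have htail : ∀ n, ∑ k ∈ Finset.Ico N n, g k ≤ 1/2 := by
    intro n
    have hsummN : Summable (fun k => g (k + N)) := (summable_nat_add_iff N).2 hgsum
    have h1 : ∑ k ∈ Finset.Ico N n, g k = ∑ k ∈ Finset.range (n - N), g (k + N) := by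
      rw [Finset.sum_Ico_eq_sum_range]
      exact Finset.sum_congr rfl (fun k _ => by rw [add_comm])
    rw [h1]
    calc ∑ k ∈ Finset.range (n - N), g (k + N) ≤ ∑' k, g (k + N) :=
          Summable.sum_le_tsum _ (fun k _ => hg0 _) hsummN
      _ ≤ 1/2 := hN.le
  set p : ℝ := P N * (1/2) with hp_def
  have hppos : 0 < p := by rw [hp_def]; exact mul_pos (hP0 N) (by norm_num)
  have hplb : ∀ n, p ≤ P n := by
    intro n
    rcases le_total n N with h | h
    · have := hPanti n N h
      nlinarith [hP0 N]
    · have hprod : P n = P N * ∏ k ∈ Finset.Ico N n, μ k :=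
        (Finset.prod_range_mul_prod_Ico μ h).symm
      have hW : 1 - ∑ k ∈ Finset.Ico N n, (1 - μ k) ≤ ∏ k ∈ Finset.Ico N n, (1 - (1 - μ k)) :=
        prod_one_sub_ge _ _ (fun k _ => by linarith [hμ1 k]) (fun k _ => by linarith [hμ0 k])
      have hsum' : ∑ k ∈ Finset.Ico N n, (1 - μ k) ≤ 1/2 :=
        le_trans (Finset.sum_le_sum (fun k _ => hδg k)) (htail n)
      have hW' : (1:ℝ)/2 ≤ ∏ k ∈ Finset.Ico N n, μ k := by
        have : ∏ k ∈ Finset.Ico N n, (1 - (1 - μ k)) = ∏ k ∈ Finset.Ico N n, μ k := by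
          apply Finset.prod_congr rfl; intro k _; ring
        rw [this] at hW
        linarith
      rw [hprod, hp_def]
      exact mul_le_mul_of_nonneg_left hW' (hP0 N).le
  have hwPz : ∀ n, w n = P n * z n := by
    intro n
    simp only [hz_def]
    rw [mul_comm]
    exact (div_mul_cancel₀ (w n) (hP0 n).ne').symm
  have hwlb : ∀ n : ℕ, 0 ≤ z 0 + n * c → p * (z 0 + n * c) ≤ w n := by
    intro n hn
    rw [hwPz n]
    calc p * (z 0 + n * c) ≤ P n * (z 0 + n * c) :=
          mul_le_mul_of_nonneg_right (hplb n) hn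
      _ ≤ P n * z n := mul_le_mul_of_nonneg_left (hzge n) (hP0 n).le
  obtain ⟨N0, hN0⟩ := exists_nat_ge (-(z 0) / c)
  have hzpos : ∀ n : ℕ, N0 ≤ n → 0 ≤ z 0 + n * c := by
    intro n hn
    have h1 : -(z 0) / c ≤ (n : ℝ) := le_trans hN0 (by exact_mod_cast hn)
    rw [div_le_iff₀ hc] at h1
    linarith
  have hcomp : Tendsto (fun n : ℕ => p * (z 0 + n * c) + a) atTop atTop := by
    have h2 := ((tendsto_natCast_atTop_atTop (R := ℝ)).const_mul_atTop
      (mul_pos hppos hc))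
    have h3 := tendsto_atTop_add_const_right atTop (p * z 0 + a) h2
    have heq : (fun n : ℕ => p * (z 0 + n * c) + a)
        = fun n : ℕ => (p * c) * (n : ℝ) + (p * z 0 + a) := by
      funext n; ring
    rw [heq]
    exact h3
  have heventop : Tendsto (fun n => x (2 * n)) atTop atTop := by
    apply tendsto_atTop_mono' atTop ?_ hcomp
    filter_upwards [eventually_ge_atTop N0] with n hn
    have := hwlb n (hzpos n hn)
    have : p * (z 0 + n * c) ≤ x (2 * n) - a := this
    linarith
  refine ⟨heventop, ?_⟩
  -- odd subsequence to -∞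
  have hl2 : Tendsto (fun n => 2 - lam n) atTop (nhds 0) := hsum.tendsto_atTop_zero
  obtain ⟨M, hM⟩ := eventually_atTop.1 (hl2.eventually_lt_const
    (show (0:ℝ) < 1/2 by norm_num))
  have hcomp2 : Tendsto (fun n : ℕ => -(1/2 * (p * (z 0 + n * c))) + a) atTop atBot := by
    have h1 : Tendsto (fun n : ℕ => p * (z 0 + n * c)) atTop atTop := by
      have h2 := ((tendsto_natCast_atTop_atTop (R := ℝ)).const_mul_atTop
        (mul_pos hppos hc))
      have h3 := tendsto_atTop_add_const_right atTop (p * z 0) h2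
      have heq : (fun n : ℕ => p * (z 0 + n * c))
          = fun n : ℕ => (p * c) * (n : ℝ) + p * z 0 := by
        funext n; ring
      rw [heq]; exact h3
    have h4 : Tendsto (fun n : ℕ => 1/2 * (p * (z 0 + n * c))) atTop atTop :=
      h1.const_mul_atTop (by norm_num)
    exact tendsto_atBot_add_const_right atTop a (tendsto_neg_atBot_iff.2 h4)
  apply tendsto_atBot_mono' atTop ?_ hcomp2
  filter_upwards [eventually_ge_atTop N0, eventually_ge_atTop M] with n hn hMn
  have hwn : p * (z 0 + n * c) ≤ w n := hwlb n (hzpos n hn)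
  have hwn0 : 0 ≤ w n := le_trans (mul_nonneg hppos.le (hzpos n hn)) hwn
  have hlamn : 2 - lam (2 * n) < 1/2 := hM (2 * n) (by omega)
  have hxodd : x (2 * n + 1) = (1 - lam (2 * n)) * w n + a := by
    rw [hodd n]; simp only [hw_def]; ring
  have hkey : (1 - lam (2 * n)) * w n ≤ -(1/2) * w n := by
    apply mul_le_mul_of_nonneg_right _ hwn0
    linarith
  have : -(1/2) * w n ≤ -(1/2) * (p * (z 0 + n * c)) := by
    apply mul_le_mul_of_nonpos_left hwn
    norm_num
  rw [hxodd]
  linarith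

private lemma tendsto_abs_of_evenodd {f : ℕ → ℝ}
    (h1 : Tendsto (fun n => f (2 * n)) atTop atTop)
    (h2 : Tendsto (fun n => f (2 * n + 1)) atTop atTop) : Tendsto f atTop atTop := by
  rw [tendsto_atTop] at h1 h2 ⊢
  intro C
  obtain ⟨N1, hN1⟩ := eventually_atTop.1 (h1 C)
  obtain ⟨N2, hN2⟩ := eventually_atTop.1 (h2 C)
  refine eventually_atTop.2 ⟨2 * N1 + 2 * N2 + 2, fun m hm => ?_⟩
  rcases Nat.even_or_odd m with ⟨k, hk⟩ | ⟨k, hk⟩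
  · have h := hN1 k (by omega)
    rw [two_mul] at h
    rw [hk]; exact h
  · rw [hk]; exact hN2 k (by omega)

theorem unbounded_of_summable_errors
    (a b : ℝ) (hab : a ≠ b) (lam : ℕ → ℝ)
    (hlam : ∀ n, 1 < lam n ∧ lam n < 2)
    (hlim : Tendsto lam atTop (nhds 2))
    (hsum : Summable (fun n => 2 - lam n))
    (x : ℕ → ℝ)
    (hodd : ∀ n, x (2 * n + 1) = (1 - lam (2 * n)) * x (2 * n) + lam (2 * n) * a)
    (heven : ∀ n, x (2 * n + 2) = (1 - lam (2 * n + 1)) * x (2 * n + 1) + lam (2 * n + 1) * b) :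
    ((a < b → Tendsto (fun n => x (2 * n)) atTop atTop ∧
        Tendsto (fun n => x (2 * n + 1)) atTop atBot) ∧
      (b < a → Tendsto (fun n => x (2 * n)) atTop atBot ∧
        Tendsto (fun n => x (2 * n + 1)) atTop atTop)) ∧
      Tendsto (fun n => |x n|) atTop atTop := by
  have hneg : b < a → Tendsto (fun n => x (2 * n)) atTop atBot ∧
      Tendsto (fun n => x (2 * n + 1)) atTop atTop := by
    intro h
    have h' := key (-a) (-b) (by linarith) lam hlam hsum (fun n => -x n)
      (fun n => by rw [hodd n]; ring)
      (fun n => by rw [heven n]; ring)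
    exact ⟨tendsto_neg_atTop_iff.1 h'.1, tendsto_neg_atBot_iff.1 h'.2⟩
  have hpos : a < b → Tendsto (fun n => x (2 * n)) atTop atTop ∧
      Tendsto (fun n => x (2 * n + 1)) atTop atBot := fun h =>
    key a b h lam hlam hsum x hodd heven
  refine ⟨⟨hpos, hneg⟩, ?_⟩
  rcases hab.lt_or_gt with h | h
  · obtain ⟨h1, h2⟩ := hpos h
    exact tendsto_abs_of_evenodd (tendsto_abs_atTop_atTop.comp h1)
      (tendsto_abs_atBot_atTop.comp h2)
  · obtain ⟨h1, h2⟩ := hneg h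
    exact tendsto_abs_of_evenodd (tendsto_abs_atBot_atTop.comp h1)
      (tendsto_abs_atTop_atTop.comp h2)
end

section
/- Let a ≠ b in ℝ, x₀ ∈ ℝ, and λ_n := (2n+3)/(n+2) for all n ∈ ℕ. For the iteration x_{2n+1} = (1−λ_{2n})x_{2n} + λ_{2n}a, x_{2n+2} = (1−λ_{2n+1})x_{2n+1} + λ_{2n+1}b, the even subsequence satisfies x_{2n} = x₀/(2n+1) + Σ_{k=0}^{n−1} d_k (2k+3)/(2n+1), where d_k := (1−λ_{2k+1})λ_{2k}a + λ_{2k+1}b, and x_{2n} → sign(b−a)·∞. -/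
open Filter Finset

theorem telescoping_case_divergence
    (a b : ℝ) (hab : a ≠ b) (lam : ℕ → ℝ)
    (hlam : ∀ n, lam n = (2 * (n : ℝ) + 3) / ((n : ℝ) + 2))
    (x : ℕ → ℝ)
    (hodd : ∀ n, x (2 * n + 1) = (1 - lam (2 * n)) * x (2 * n) + lam (2 * n) * a)
    (heven : ∀ n, x (2 * n + 2) = (1 - lam (2 * n + 1)) * x (2 * n + 1) + lam (2 * n + 1) * b)
    (d : ℕ → ℝ)
    (hd : ∀ k, d k = (1 - lam (2 * k + 1)) * lam (2 * k) * a + lam (2 * k + 1) * b) :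
    (∀ n, x (2 * n) = x 0 / (2 * (n : ℝ) + 1) +
        ∑ k ∈ range n, d k * (2 * (k : ℝ) + 3) / (2 * (n : ℝ) + 1)) ∧
      (a < b → Tendsto (fun n => x (2 * n)) atTop atTop) ∧
      (b < a → Tendsto (fun n => x (2 * n)) atTop atBot) := by
  have key : ∀ n : ℕ, x (2 * n) = (n : ℝ) * (b - a) + b + (x 0 - b) / (2 * (n : ℝ) + 1) := by
    intro n
    induction n with
    | zero => simp
    | succ n ih =>
      have e1 := hodd n
      have e2 := heven n
      rw [hlam] at e1 e2
      push_cast at e1 e2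
      have hidx : 2 * (n + 1) = 2 * n + 2 := by ring
      rw [hidx, e2, e1, ih]
      have h1 : (2 * (n : ℝ) + 1) ≠ 0 := by positivity
      have h2 : (2 * (n : ℝ) + 2) ≠ 0 := by positivity
      have h3 : (2 * (n : ℝ) + 3) ≠ 0 := by positivity
      push_cast
      field_simp
      ring
  have hdk : ∀ k : ℕ, d k * (2 * (k : ℝ) + 3) = (4 * (k : ℝ) + 5) * b - (4 * (k : ℝ) + 3) * a := by
    intro k
    rw [hd, hlam, hlam]
    have h2 : (2 * (k : ℝ) + 2) ≠ 0 := by positivity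
    have h3 : (2 * (k : ℝ) + 3) ≠ 0 := by positivity
    push_cast
    field_simp
    ring
  have hsum : ∀ n : ℕ, ∑ k ∈ range n, d k * (2 * (k : ℝ) + 3) =
      (n : ℝ) * (2 * (n : ℝ) + 1) * (b - a) + 2 * (n : ℝ) * b := by
    intro n
    induction n with
    | zero => simp
    | succ n ih =>
      rw [sum_range_succ, ih, hdk]
      push_cast
      ring
  refine ⟨?_, ?_, ?_⟩
  · intro n
    have h1 : (2 * (n : ℝ) + 1) ≠ 0 := by positivity
    rw [key n]
    have : ∑ k ∈ range n, d k * (2 * (k : ℝ) + 3) / (2 * (n : ℝ) + 1) =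
        (∑ k ∈ range n, d k * (2 * (k : ℝ) + 3)) / (2 * (n : ℝ) + 1) := by
      rw [sum_div]
    rw [this, hsum]
    field_simp
    ring
  · intro hlt
    have h1 : Tendsto (fun n : ℕ => (n : ℝ) * (b - a)) atTop atTop :=
      tendsto_natCast_atTop_atTop.atTop_mul_const (by linarith)
    have h2 : Tendsto (fun n : ℕ => b + (x 0 - b) / (2 * (n : ℝ) + 1)) atTop (nhds (b + 0)) := by
      refine tendsto_const_nhds.add (Tendsto.div_atTop tendsto_const_nhds ?_)
      exact tendsto_atTop_add_const_right _ 1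
        (tendsto_natCast_atTop_atTop.const_mul_atTop two_pos)
    have := h1.atTop_add h2
    refine this.congr fun n => ?_
    rw [key n]; ring
  · intro hlt
    have h1 : Tendsto (fun n : ℕ => (n : ℝ) * (b - a)) atTop atBot := by
      have := tendsto_natCast_atTop_atTop (R := ℝ)
      exact Filter.Tendsto.atTop_mul_const_of_neg (by linarith) this
    have h2 : Tendsto (fun n : ℕ => b + (x 0 - b) / (2 * (n : ℝ) + 1)) atTop (nhds (b + 0)) := by
      refine tendsto_const_nhds.add (Tendsto.div_atTop tendsto_const_nhds ?_)
      exact tendsto_atTop_add_const_right _ 1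
        (tendsto_natCast_atTop_atTop.const_mul_atTop two_pos)
    have := h1.atBot_add h2
    refine this.congr fun n => ?_
    rw [key n]; ring
end
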